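/- arXiv:1101.3621 — 6 statements merged into one kernel-verified Lean document; each statement's English description precedes it below -/
import Mathlib

section
/- Let M = (M_k)_{k ∈ M_I^×} be a BZ datum associated to a finite interval I (satisfying the edge inequalities (BZ-1) and tropical Plücker relations (BZ-2)). Define M* by (M*)_k := M_{k^c} where k^c = Ĩ \ k. Then M* also satisfies (BZ-1) and (BZ-2). Moreover, if M is a w_0-BZ datum (M_{k(Λ_i^I)^c} = 0 for all i ∈ I), then M* is an e-BZ datum (M*_{k(Λ_i^I)} = 0 for all i ∈ I), and the map M ↦ M* is a bijection from the set of w_0-BZ data to the set of e-BZ data. -/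
/-- A BZ datum associated to the interval `I` (with `Ĩ` of size `m+1`,
indices shifted to `{0, …, m}`), encoded as a function on all subsets of `Ĩ`
with the convention `M_∅ = M_Ĩ = 0`, satisfying the edge inequalities (BZ-1)
and the tropical Plücker relations (BZ-2). -/
def IsBZ (m : ℕ) (M : Finset (Fin (m + 1)) → ℤ) : Prop :=
  M ∅ = 0 ∧ M Finset.univ = 0 ∧
  (∀ i j : Fin (m + 1), i ≠ j → ∀ s : Finset (Fin (m + 1)), i ∉ s → j ∉ s →
    M (insert i s) + M (insert j s) ≤ M (insert i (insert j s)) + M s) ∧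
  (∀ i j t : Fin (m + 1), i < j → j < t → ∀ s : Finset (Fin (m + 1)),
    i ∉ s → j ∉ s → t ∉ s →
    M (insert i (insert t s)) + M (insert j s) =
      min (M (insert i (insert j s)) + M (insert t s))
          (M (insert j (insert t s)) + M (insert i s)))

/-- `k(Λ_i) = [n+1, i]`, i.e. (shifted) `{j : j ≤ i}` for `i ∈ I = {0, …, m-1}`. -/
def kLam (m : ℕ) (i : Fin m) : Finset (Fin (m + 1)) :=
  Finset.univ.filter (fun j => (j : ℕ) ≤ (i : ℕ))

/-- The map `∗`: `(M^*)_k = M_{k^c}`. -/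
def starM (m : ℕ) (M : Finset (Fin (m + 1)) → ℤ) : Finset (Fin (m + 1)) → ℤ :=
  fun s => M sᶜ

/-- A `w₀`-BZ datum: `M_{k(Λ_i)^c} = 0` for all `i ∈ I`. -/
def IsW0BZ (m : ℕ) (M : Finset (Fin (m + 1)) → ℤ) : Prop :=
  IsBZ m M ∧ ∀ i : Fin m, M (kLam m i)ᶜ = 0

/-- An `e`-BZ datum: `M_{k(Λ_i)} = 0` for all `i ∈ I`. -/
def IsEBZ (m : ℕ) (M : Finset (Fin (m + 1)) → ℤ) : Prop :=
  IsBZ m M ∧ ∀ i : Fin m, M (kLam m i) = 0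

/-- If `M` is a BZ datum then so is `M^*`; `∗` sends `w₀`-BZ data to `e`-BZ
data, and is a bijection between the set of `w₀`-BZ data and the set of
`e`-BZ data. -/
theorem stmt8 (m : ℕ) :
    (∀ M : Finset (Fin (m + 1)) → ℤ, IsBZ m M → IsBZ m (starM m M)) ∧
    (∀ M : Finset (Fin (m + 1)) → ℤ, IsW0BZ m M → IsEBZ m (starM m M)) ∧
    Set.BijOn (starM m) {M | IsW0BZ m M} {M | IsEBZ m M} := by
  have hstarstar : ∀ M : Finset (Fin (m + 1)) → ℤ, starM m (starM m M) = M := by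
    intro M; funext s; simp [starM]
  have hstar : ∀ M : Finset (Fin (m + 1)) → ℤ, IsBZ m M → IsBZ m (starM m M) := by
    intro M hM
    obtain ⟨h0, hu, h1, h2⟩ := hM
    refine ⟨by simpa [starM] using hu, by simpa [starM] using h0, ?_, ?_⟩
    · intro i j hij s hi hj
      obtain ⟨s', hs'⟩ : ∃ u, u = (insert i (insert j s))ᶜ := ⟨_, rfl⟩
      have hi' : i ∉ s' := by simp [hs']
      have hj' : j ∉ s' := by simp [hs']
      have e1 : (insert i s)ᶜ = insert j s' := by
        ext x
        simp only [hs', Finset.mem_compl, Finset.mem_insert]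
        constructor
        · intro h; by_cases hx : x = j <;> tauto
        · rintro (rfl | h) <;> tauto
      have e2 : (insert j s)ᶜ = insert i s' := by
        ext x
        simp only [hs', Finset.mem_compl, Finset.mem_insert]
        constructor
        · intro h; by_cases hx : x = i <;> tauto
        · rintro (rfl | h) <;> tauto
      have e3 : sᶜ = insert i (insert j s') := by
        ext x
        simp only [hs', Finset.mem_compl, Finset.mem_insert]
        constructor
        · intro h; by_cases hx : x = i; · tauto
          by_cases hy : x = j <;> tauto
        · rintro (rfl | rfl | h) <;> tauto
      simp only [starM, e1, e2, e3, ← hs']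
      have := h1 i j hij s' hi' hj'
      linarith
    · intro i j t hij hjt s hi hj ht
      have hij' : i ≠ j := ne_of_lt hij
      have hjt' : j ≠ t := ne_of_lt hjt
      have hit' : i ≠ t := ne_of_lt (lt_trans hij hjt)
      obtain ⟨s', hs'⟩ : ∃ u, u = (insert i (insert j (insert t s)))ᶜ := ⟨_, rfl⟩
      have hi' : i ∉ s' := by simp [hs']
      have hj' : j ∉ s' := by simp [hs']
      have ht' : t ∉ s' := by simp [hs']
      have key : ∀ x, x ∈ s' ↔ (x ≠ i ∧ x ≠ j ∧ x ≠ t ∧ x ∉ s) := by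
        intro x; simp only [hs', Finset.mem_compl, Finset.mem_insert]; tauto
      have e1 : (insert i (insert t s))ᶜ = insert j s' := by
        ext x
        simp only [Finset.mem_compl, Finset.mem_insert, key x]
        constructor
        · intro h; by_cases hx : x = j <;> tauto
        · rintro (rfl | h) <;> tauto
      have e2 : (insert j s)ᶜ = insert i (insert t s') := by
        ext x
        simp only [Finset.mem_compl, Finset.mem_insert, key x]
        constructor
        · intro h; by_cases hx : x = i; · tauto
          by_cases hy : x = t <;> tauto
        · rintro (rfl | rfl | h) <;> tauto
      have e3 : (insert i (insert j s))ᶜ = insert t s' := by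
        ext x
        simp only [Finset.mem_compl, Finset.mem_insert, key x]
        constructor
        · intro h; by_cases hx : x = t <;> tauto
        · rintro (rfl | h) <;> tauto
      have e4 : (insert t s)ᶜ = insert i (insert j s') := by
        ext x
        simp only [Finset.mem_compl, Finset.mem_insert, key x]
        constructor
        · intro h; by_cases hx : x = i; · tauto
          by_cases hy : x = j <;> tauto
        · rintro (rfl | rfl | h) <;> tauto
      have e5 : (insert j (insert t s))ᶜ = insert i s' := by
        ext x
        simp only [Finset.mem_compl, Finset.mem_insert, key x]
        constructor
        · intro h; by_cases hx : x = i <;> tauto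
        · rintro (rfl | h) <;> tauto
      have e6 : (insert i s)ᶜ = insert j (insert t s') := by
        ext x
        simp only [Finset.mem_compl, Finset.mem_insert, key x]
        constructor
        · intro h; by_cases hx : x = j; · tauto
          by_cases hy : x = t <;> tauto
        · rintro (rfl | rfl | h) <;> tauto
      simp only [starM, e1, e2, e3, e4, e5, e6]
      have := h2 i j t hij hjt s' hi' hj' ht'
      omega
  have hw0e : ∀ M : Finset (Fin (m + 1)) → ℤ, IsW0BZ m M → IsEBZ m (starM m M) := by
    intro M hM
    exact ⟨hstar M hM.1, fun i => hM.2 i⟩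
  refine ⟨hstar, hw0e, ?_, ?_, ?_⟩
  · intro M hM; exact hw0e M hM
  · intro a _ b _ h
    have := congrArg (starM m) h
    rwa [hstarstar, hstarstar] at this
  · intro N hN
    refine ⟨starM m N, ?_, hstarstar N⟩
    refine ⟨hstar N hN.1, fun i => ?_⟩
    simpa [starM] using hN.2 i
end

section
/- Let a = (a_{i,j}) be a Lusztig datum associated to ℤ (nonnegative integers indexed by pairs i < j in ℤ, with a_{i,j} = 0 whenever j - i ≥ N_a). Let I = [n+1, n+m] and k = (k_{n+1} < ⋯ < k_{n+u}) ∈ M_I^× with u ≥ N_a. If k_j = j for each n+1 ≤ j ≤ n+N_a, then M_k(a^I) = M_{k'}(a^{I'}) for all d > 0, where I' = [n-d+1, n+m], k' = [n-d+1, n] ∪ k, a^J denotes the restriction of a to Δ_J^+, and M_k(a^I) is defined by formula (2.4.1): M_k(a^I) = -∑_{j=n+1}^{n+u} ∑_{i=n+1}^{k_j - 1} a_{i, k_j} + min over all k-tableaux C = (c_{p,q}) of ∑_{n+1 ≤ p < q ≤ n+u} a_{c_{p,q}, c_{p,q} + (q-p)}. -/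
/-- Restriction `a^J` of a Lusztig datum to the interval `J̃ = [lo, hi]`:
entries outside `Δ_J^+` are set to `0`. -/
def aRes (lo hi : ℤ) (a : ℤ → ℤ → ℕ) : ℤ → ℤ → ℕ :=
  fun i j => if lo ≤ i ∧ i < j ∧ j ≤ hi then a i j else 0

/-- `C` is a `κ`-tableau of size `u` (indices 0-indexed, `κ` listing
`k_{n+1} < ⋯ < k_{n+u}`): upper-triangular with diagonal `κ`, weakly
increasing along rows and strictly increasing down columns. -/
def IsTab (u : ℕ) (κ : ℕ → ℤ) (C : ℕ → ℕ → ℤ) : Prop :=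
  (∀ p < u, C p p = κ p) ∧
  (∀ p q : ℕ, p ≤ q → q + 1 < u → C p q ≤ C p (q + 1)) ∧
  (∀ p q : ℕ, p + 1 ≤ q → q < u → C p q < C (p + 1) q)

/-- The tableau sum `∑_{p<q} a_{c_{p,q}, c_{p,q}+(q-p)}`. -/
def TabSum (a : ℤ → ℤ → ℕ) (u : ℕ) (C : ℕ → ℕ → ℤ) : ℤ :=
  ∑ p ∈ Finset.range u, ∑ q ∈ Finset.range u,
    if p < q then (a (C p q) (C p q + (q : ℤ) - (p : ℤ)) : ℤ) else 0

/-- Formula (2.4.1):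
`M_k(a) = -∑_{j} ∑_{i=n+1}^{k_j - 1} a_{i,k_j} + min { tableau sums }`,
for the interval with left endpoint `n+1` and `k` enumerated by `κ` (size `u`). -/
noncomputable def Mval (a : ℤ → ℤ → ℕ) (n : ℤ) (u : ℕ) (κ : ℕ → ℤ) : ℤ :=
  -(∑ j ∈ Finset.range u, ∑ i ∈ Finset.Ico (n + 1) (κ j), (a i (κ j) : ℤ))
    + sInf {S : ℤ | ∃ C : ℕ → ℕ → ℤ, IsTab u κ C ∧ S = TabSum a u C}

/-!
The first `N` entries of `k'` are the consecutive integers `n - d + 1, …, n + N`, and the entries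
of a tableau satisfy `k_p ≤ c_{p,q} ≤ k_q - (q - p)`; hence in a `k'`-tableau every row is constant
on the first `d + N` columns. As `a` vanishes at distance `≥ N`, the first `d` rows of any
`k'`-tableau contribute the same amount `E = ∑_{p < d, p < q} a_{k'_p, k'_q}`, while the remaining
rows form an arbitrary `k`-tableau (each `k`-tableau extends by continuing its first row upwards).
The linear term of `M_{k'}` exceeds that of `M_k` by the same `E`, so the two cancel.
-/

open Finset

lemma sum_Ico_add_natCast (c : ℤ) (t : ℕ) (f : ℤ → ℤ) :
    ∑ i ∈ Ico c (c + t), f i = ∑ p ∈ range t, f (c + p) := by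
  rw [← sum_image (g := fun p : ℕ => c + p) (by intro x _ y _ h; simpa using h)]
  congr 1
  ext i
  simp only [mem_Ico, mem_image, mem_range]
  constructor
  · intro h
    exact ⟨(i - c).toNat, by omega, by omega⟩
  · rintro ⟨p, hp, rfl⟩
    omega

lemma sum_range_ite_lt (d j : ℕ) (f : ℕ → ℤ) :
    ∑ p ∈ range d, (if p < j then f p else 0) = ∑ p ∈ range (min d j), f p := by
  rw [← sum_filter]
  congr 1
  ext p
  simp

lemma aRes_eq_of_le {lo lo' hi i : ℤ} (a : ℤ → ℤ → ℕ) (j : ℤ) (hlo : lo' ≤ lo) (hle : lo ≤ i) :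
    aRes lo' hi a i j = aRes lo hi a i j := by
  unfold aRes
  split_ifs <;> first | rfl | omega

lemma aRes_eq_zero {N : ℕ} {a : ℤ → ℤ → ℕ} (ha : ∀ i j : ℤ, (N : ℤ) ≤ j - i → a i j = 0)
    (lo hi : ℤ) : ∀ i j : ℤ, (N : ℤ) ≤ j - i → aRes lo hi a i j = 0 := by
  intro i j hij
  unfold aRes
  split_ifs
  exacts [ha i j hij, rfl]

def prependRange (c : ℤ) (d : ℕ) (κ : ℕ → ℤ) (t : ℕ) : ℤ :=
  if t < d then c + t else κ (t - d)

@[simp]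
lemma prependRange_of_lt {c : ℤ} {d t : ℕ} (κ : ℕ → ℤ) (ht : t < d) :
    prependRange c d κ t = c + t := if_pos ht

@[simp]
lemma prependRange_add (c : ℤ) (d : ℕ) (κ : ℕ → ℤ) (t : ℕ) :
    prependRange c d κ (d + t) = κ t := by
  simp [prependRange]

namespace IsTab

variable {u : ℕ} {μ : ℕ → ℤ} {C : ℕ → ℕ → ℤ}

theorem le_apply_add (hC : IsTab u μ C) {p k : ℕ} (h : p + k < u) : μ p ≤ C p (p + k) := by
  induction k with
  | zero => exact (hC.1 p h).ge
  | succ k ih => exact (ih (by omega)).trans (hC.2.1 p (p + k) (by omega) (by omega))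

theorem apply_add_add_le (hC : IsTab u μ C) {p k : ℕ} (h : p + k < u) :
    C p (p + k) + k ≤ μ (p + k) := by
  induction k generalizing p with
  | zero => simp [hC.1 p h]
  | succ k ih =>
    have hcol := hC.2.2 p (p + (k + 1)) (by omega) h
    have hnext := ih (p := p + 1) (by omega)
    rw [show p + 1 + k = p + (k + 1) by omega] at hnext
    push_cast
    linarith

theorem apply_eq_of_eq_add {M : ℕ} {c : ℤ} (hC : IsTab u μ C) (hμ : ∀ t < M, μ t = c + t)
    (hM : M ≤ u) {p q : ℕ} (hpq : p ≤ q) (hq : q < M) : C p q = c + p := by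
  obtain ⟨k, rfl⟩ := Nat.exists_eq_add_of_le hpq
  have hlow := hC.le_apply_add (k := k) (p := p) (by omega)
  have hupp := hC.apply_add_add_le (k := k) (p := p) (by omega)
  rw [hμ p (by omega)] at hlow
  rw [hμ (p + k) hq] at hupp
  push_cast at hupp
  linarith

theorem drop {d : ℕ} (hC : IsTab (d + u) μ C) :
    IsTab u (fun t => μ (d + t)) (fun p q => C (d + p) (d + q)) :=
  ⟨fun p hp => hC.1 (d + p) (by omega),
    fun p q hpq hq => hC.2.1 (d + p) (d + q) (by omega) (by omega),
    fun p q hpq hq => hC.2.2 (d + p) (d + q) (by omega) (by omega)⟩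

theorem tabSum_congr {x : ℤ} {a b : ℤ → ℤ → ℕ} (hC : IsTab u μ C) (hμ : ∀ t < u, x ≤ μ t)
    (hab : ∀ i j, x ≤ i → a i j = b i j) : TabSum a u C = TabSum b u C := by
  refine sum_congr rfl fun p hp => sum_congr rfl fun q hq => ?_
  rw [mem_range] at hp hq
  split_ifs with hpq
  · obtain ⟨k, rfl⟩ := Nat.exists_eq_add_of_le hpq.le
    rw [hab _ _ ((hμ p hp).trans (hC.le_apply_add hq))]
  · rfl

end IsTab

lemma isTab_rows {u : ℕ} {μ : ℕ → ℤ} (hμ : ∀ t, t + 1 < u → μ t < μ (t + 1)) :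
    IsTab u μ (fun p _ => μ p) :=
  ⟨fun _ _ => rfl, fun _ _ _ _ => le_rfl, fun p _ _ hq => hμ p (by omega)⟩

/-- Since `q - d` truncates to `0` for `q < d`, row `p < d` is the constant `C 0 0 + p - d` on the
first `d` columns and then runs parallel to row `0` of `C`. -/
def extendTab (d : ℕ) (C : ℕ → ℕ → ℤ) (p q : ℕ) : ℤ :=
  if p < d then C 0 (q - d) + p - d else C (p - d) (q - d)

@[simp]
lemma extendTab_add (d : ℕ) (C : ℕ → ℕ → ℤ) (p q : ℕ) : extendTab d C (d + p) (d + q) = C p q := by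
  simp [extendTab]

lemma IsTab.extendTab {u d : ℕ} {c : ℤ} {κ : ℕ → ℤ} {C : ℕ → ℕ → ℤ} (hC : IsTab u κ C)
    (hu : 0 < u) (hκ : κ 0 = c + d) :
    IsTab (d + u) (prependRange c d κ) (extendTab d C) := by
  refine ⟨fun p hp => ?_, fun p q hpq hq => ?_, fun p q hpq hq => ?_⟩
  · by_cases h : p < d
    · simp only [_root_.extendTab, if_pos h, prependRange_of_lt κ h,
        Nat.sub_eq_zero_of_le h.le, hC.1 0 hu, hκ]
      ring
    · simp only [_root_.extendTab, prependRange, if_neg h]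
      exact hC.1 (p - d) (by omega)
  · by_cases h : p < d
    · have hrow : C 0 (q - d) ≤ C 0 (q + 1 - d) := by
        rcases le_or_gt d q with hdq | hdq
        · rw [show q + 1 - d = q - d + 1 by omega]
          exact hC.2.1 0 (q - d) (by omega) (by omega)
        · rw [show q + 1 - d = q - d by omega]
      simp only [_root_.extendTab, if_pos h]
      linarith
    · simp only [_root_.extendTab, if_neg h, show q + 1 - d = q - d + 1 by omega]
      exact hC.2.1 (p - d) (q - d) (by omega) (by omega)
  · rcases lt_trichotomy (p + 1) d with h | h | h
    · simp only [_root_.extendTab, if_pos h, if_pos (show p < d by omega)]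
      push_cast
      linarith
    · subst h
      simp only [_root_.extendTab, lt_add_one, if_true, lt_irrefl, if_false, Nat.sub_self]
      push_cast
      linarith
    · simp only [_root_.extendTab, if_neg (show ¬p < d by omega), if_neg (show ¬p + 1 < d by omega),
        show p + 1 - d = p - d + 1 by omega]
      exact hC.2.2 (p - d) (q - d) (by omega) (by omega)

lemma tabSum_nonneg (a : ℤ → ℤ → ℕ) (u : ℕ) (C : ℕ → ℕ → ℤ) : 0 ≤ TabSum a u C :=
  sum_nonneg fun _ _ => sum_nonneg fun _ _ => by split_ifs <;> positivity

def topRowsSum (a : ℤ → ℤ → ℕ) (d v : ℕ) (μ : ℕ → ℤ) : ℤ :=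
  ∑ p ∈ range d, ∑ q ∈ range v, if p < q then (a (μ p) (μ q) : ℤ) else 0

lemma IsTab.tabSum_eq_topRowsSum_add {a : ℤ → ℤ → ℕ} {N d u : ℕ} {c : ℤ} {μ : ℕ → ℤ}
    {C : ℕ → ℕ → ℤ} (ha : ∀ i j : ℤ, (N : ℤ) ≤ j - i → a i j = 0) (hC : IsTab (d + u) μ C)
    (hμ : ∀ t < d + N, μ t = c + t) (hN : N ≤ u) :
    TabSum a (d + u) C = topRowsSum a d (d + u) μ + TabSum a u (fun p q => C (d + p) (d + q)) := by
  rw [TabSum, sum_range_add]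
  congr 1
  · refine sum_congr rfl fun p hp => sum_congr rfl fun q hq => ?_
    rw [mem_range] at hp hq
    split_ifs with hpq
    · obtain ⟨k, rfl⟩ := Nat.exists_eq_add_of_le hpq.le
      by_cases hk : p + k < d + N
      · rw [hC.apply_eq_of_eq_add hμ (by omega) (Nat.le_add_right p k) hk, hμ p (by omega), hμ _ hk]
        push_cast
        ring_nf
      · have hlow := hC.le_apply_add hq
        have hupp := hC.apply_add_add_le hq
        rw [ha _ _ (by push_cast; omega), ha _ _ (by omega)]
    · rfl
  · refine sum_congr rfl fun p _ => ?_
    rw [sum_range_add, sum_eq_zero fun q hq => if_neg (by rw [mem_range] at hq; omega), zero_add]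
    refine sum_congr rfl fun q _ => ?_
    simp only [add_lt_add_iff_left]
    push_cast
    ring_nf

lemma setOf_tabSum_prependRange {a : ℤ → ℤ → ℕ} {N d u : ℕ} {c : ℤ} {κ : ℕ → ℤ}
    (ha : ∀ i j : ℤ, (N : ℤ) ≤ j - i → a i j = 0) (hκ : ∀ t < N, κ t = c + d + t)
    (hN : 0 < N) (hNu : N ≤ u) :
    {S | ∃ C, IsTab (d + u) (prependRange c d κ) C ∧ S = TabSum a (d + u) C} =
      (topRowsSum a d (d + u) (prependRange c d κ) + ·) ''
        {S | ∃ C, IsTab u κ C ∧ S = TabSum a u C} := by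
  have hμ : ∀ t < d + N, prependRange c d κ t = c + t := by
    intro t ht
    rcases lt_or_ge t d with htd | htd
    · exact prependRange_of_lt κ htd
    · obtain ⟨s, rfl⟩ := Nat.exists_eq_add_of_le htd
      rw [prependRange_add, hκ s (by omega)]
      push_cast
      ring
  ext S
  constructor
  · rintro ⟨C, hC, rfl⟩
    refine ⟨_, ⟨_, by simpa using hC.drop, rfl⟩, ?_⟩
    rw [hC.tabSum_eq_topRowsSum_add ha hμ hNu]
  · rintro ⟨_, ⟨C, hC, rfl⟩, rfl⟩
    have hext := hC.extendTab (c := c) (d := d) (by omega) (by rw [hκ 0 hN]; simp)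
    refine ⟨_, hext, ?_⟩
    rw [hext.tabSum_eq_topRowsSum_add ha hμ hNu]
    simp

lemma sum_Ico_prependRange {a : ℤ → ℤ → ℕ} {u d : ℕ} {c : ℤ} {κ : ℕ → ℤ}
    (hκ : ∀ t < u, c + d ≤ κ t) :
    ∑ j ∈ range (d + u), ∑ i ∈ Ico c (prependRange c d κ j), (a i (prependRange c d κ j) : ℤ) =
      topRowsSum a d (d + u) (prependRange c d κ) +
        ∑ t ∈ range u, ∑ i ∈ Ico (c + d) (κ t), (a i (κ t) : ℤ) := by
  have hleft : ∀ q, ∑ p ∈ range d,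
      (if p < q then (a (prependRange c d κ p) (prependRange c d κ q) : ℤ) else 0)
      = ∑ i ∈ Ico c (c + (min d q : ℕ)), (a i (prependRange c d κ q) : ℤ) := by
    intro q
    rw [sum_range_ite_lt, sum_Ico_add_natCast]
    refine sum_congr rfl fun p hp => ?_
    rw [prependRange_of_lt κ (by rw [mem_range] at hp; omega)]
  rw [topRowsSum, sum_comm, sum_range_add, sum_range_add, add_assoc]
  congr 1
  · refine sum_congr rfl fun j hj => ?_
    rw [mem_range] at hj
    rw [hleft, min_eq_right hj.le, prependRange_of_lt κ hj]
  · rw [← sum_add_distrib]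
    refine sum_congr rfl fun t ht => ?_
    rw [hleft, min_eq_left (Nat.le_add_right d t), prependRange_add,
      ← sum_union (Ico_disjoint_Ico_consecutive c (c + d) (κ t)),
      Ico_union_Ico_eq_Ico (by omega) (hκ t (mem_range.mp ht))]

theorem stmt9_general (a : ℤ → ℤ → ℕ) (N : ℕ) (hN : 0 < N)
    (ha : ∀ i j : ℤ, (N : ℤ) ≤ j - i → a i j = 0)
    (n : ℤ) (m u : ℕ) (huN : N ≤ u)
    (κ : ℕ → ℤ)
    (hmono : ∀ s t : ℕ, s < t → t < u → κ s < κ t)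
    (hrange : ∀ t < u, n + 1 ≤ κ t ∧ κ t ≤ n + (m : ℤ) + 1)
    (hinit : ∀ t < N, κ t = n + 1 + (t : ℤ))
    (d : ℕ) :
    Mval (aRes (n + 1) (n + (m : ℤ) + 1) a) n u κ =
      Mval (aRes (n - (d : ℤ) + 1) (n + (m : ℤ) + 1) a) (n - (d : ℤ)) (u + d)
        (fun t => if t < d then n - (d : ℤ) + 1 + (t : ℤ) else κ (t - d)) := by
  set A := aRes (n + 1) (n + (m : ℤ) + 1) a
  set A' := aRes (n - (d : ℤ) + 1) (n + (m : ℤ) + 1) a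
  have hblock : n - (d : ℤ) + 1 + d = n + 1 := by ring
  have hκ : ∀ t < u, n + 1 ≤ κ t := fun t ht => (hrange t ht).1
  have hAA' : ∀ i j, n + 1 ≤ i → A' i j = A i j := fun i j => aRes_eq_of_le a j (by omega)
  have htabs := setOf_tabSum_prependRange (c := n - d + 1) (d := d) (κ := κ)
    (aRes_eq_zero ha (n - d + 1) (n + m + 1))
    (fun t ht => by rw [hinit t ht, hblock]) hN huN
  have hlin := sum_Ico_prependRange (a := A') (c := n - d + 1) (d := d) (hblock ▸ hκ)
  have hlinA : ∑ t ∈ range u, ∑ i ∈ Ico (n + 1) (κ t), (A' i (κ t) : ℤ) =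
      ∑ t ∈ range u, ∑ i ∈ Ico (n + 1) (κ t), (A i (κ t) : ℤ) :=
    sum_congr rfl fun t _ => sum_congr rfl fun i hi => by rw [hAA' i (κ t) (mem_Ico.mp hi).1]
  let S := {S | ∃ C, IsTab u κ C ∧ S = TabSum A u C}
  have hS : {S | ∃ C, IsTab u κ C ∧ S = TabSum A' u C} = S := by
    ext s
    exact exists_congr fun C => and_congr_right fun hC => by rw [hC.tabSum_congr hκ hAA']
  have hne : S.Nonempty := ⟨_, _, isTab_rows fun t ht => hmono t (t + 1) (by omega) ht, rfl⟩
  have hbdd : BddBelow S := ⟨0, by rintro _ ⟨C, -, rfl⟩; exact tabSum_nonneg A u C⟩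
  have hshift (E : ℤ) : sInf ((E + ·) '' S) = E + sInf S :=
    ((OrderIso.addLeft E).map_csInf' hne hbdd).symm
  change _ = Mval A' (n - d) (u + d) (prependRange (n - d + 1) d κ)
  rw [Mval, Mval, add_comm u d, htabs, hlin, hS, hblock, hshift, hlinA]
  ring

/-- Lemma 6.1.1(1): for a Lusztig datum `a` on `ℤ` with bound `N`, an interval
`I = [n+1, n+m]` and `k = (k_{n+1} < ⋯ < k_{n+u}) ∈ M_I^×` with `u ≥ N`, if
`k_j = j` for `n+1 ≤ j ≤ n+N`, then `M_k(a^I) = M_{k'}(a^{I'})` for all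
`d > 0`, where `I' = [n-d+1, n+m]` and `k' = [n-d+1, n] ∪ k`. -/
theorem stmt9 (a : ℤ → ℤ → ℕ) (N : ℕ) (hN : 0 < N)
    (ha : ∀ i j : ℤ, (N : ℤ) ≤ j - i → a i j = 0)
    (n : ℤ) (m u : ℕ) (hu1 : 1 ≤ u) (hum : u ≤ m) (huN : N ≤ u)
    (κ : ℕ → ℤ)
    (hmono : ∀ s t : ℕ, s < t → t < u → κ s < κ t)
    (hrange : ∀ t < u, n + 1 ≤ κ t ∧ κ t ≤ n + (m : ℤ) + 1)
    (hinit : ∀ t < N, κ t = n + 1 + (t : ℤ))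
    (d : ℕ) (hd : 0 < d) :
    Mval (aRes (n + 1) (n + (m : ℤ) + 1) a) n u κ =
      Mval (aRes (n - (d : ℤ) + 1) (n + (m : ℤ) + 1) a) (n - (d : ℤ)) (u + d)
        (fun t => if t < d then n - (d : ℤ) + 1 + (t : ℤ) else κ (t - d)) :=
  stmt9_general a N hN ha n m u huN κ hmono hrange hinit d
end

section
/- With the same notation as in the finite-interval BZ/Lusztig setup: if k_{n+1} - n ≥ N_a, then M_k(a^I) = M_k(a^{I'}) for all d > 0 where I' = [n-d+1, n+m] (k regarded as an element of M_{I'}^×); also M_k(a^I) = M_k(a^{I''}) for all d > 0 where I'' = [n+1, n+m+d]. -/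
lemma tab_lb {u : ℕ} {κ : ℕ → ℤ} {C : ℕ → ℕ → ℤ} (h : IsTab u κ C) :
    ∀ q, q < u → ∀ p, p ≤ q → κ p ≤ C p q := by
  intro q hq
  induction q with
  | zero =>
    intro p hp
    interval_cases p
    rw [h.1 0 hq]
  | succ q ih =>
    intro p hp
    rcases eq_or_lt_of_le hp with rfl | hlt
    · rw [h.1 (q + 1) hq]
    · have hp' : p ≤ q := Nat.lt_succ_iff.mp hlt
      have h1 := h.2.1 p q hp' hq
      have h2 := ih (Nat.lt_of_succ_lt hq) p hp'
      omega

lemma tab_ub {u : ℕ} {κ : ℕ → ℤ} {C : ℕ → ℕ → ℤ} (h : IsTab u κ C) :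
    ∀ d p q : ℕ, p + d = q → q < u → C p q + (d : ℤ) ≤ κ q := by
  intro d
  induction d with
  | zero =>
    intro p q hpq hq
    obtain rfl : q = p := by omega
    simp [h.1 q hq]
  | succ d ih =>
    intro p q hpq hq
    have h1 := h.2.2 p q (by omega) hq
    have h2 := ih (p + 1) q (by omega) hq
    push_cast
    push_cast at h2
    omega

lemma tabSum_congr {a b : ℤ → ℤ → ℕ} {u : ℕ} {C : ℕ → ℕ → ℤ}
    (h : ∀ p q : ℕ, p < q → q < u →
      a (C p q) (C p q + (q : ℤ) - p) = b (C p q) (C p q + (q : ℤ) - p)) :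
    TabSum a u C = TabSum b u C := by
  unfold TabSum
  refine Finset.sum_congr rfl fun p hp => Finset.sum_congr rfl fun q hq => ?_
  simp only [Finset.mem_range] at hp hq
  split_ifs with hpq
  · rw [h p q hpq hq]
  · rfl

/-- Lemma 6.1.2: (1) if `k_{n+1} - n ≥ N`, then `M_k(a^I) = M_k(a^{I'})` for
all `d > 0`, where `I' = [n-d+1, n+m]` and `k` is regarded as an element of
`M_{I'}^×`; (2) `M_k(a^I) = M_k(a^{I''})` for all `d > 0`, where
`I'' = [n+1, n+m+d]`. -/
theorem stmt11 (a : ℤ → ℤ → ℕ) (N : ℕ) (hN : 0 < N)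
    (ha : ∀ i j : ℤ, (N : ℤ) ≤ j - i → a i j = 0)
    (n : ℤ) (m u : ℕ) (hu1 : 1 ≤ u) (hum : u ≤ m)
    (κ : ℕ → ℤ)
    (hmono : ∀ s t : ℕ, s < t → t < u → κ s < κ t)
    (hrange : ∀ t < u, n + 1 ≤ κ t ∧ κ t ≤ n + (m : ℤ) + 1) :
    ((N : ℤ) ≤ κ 0 - n →
      ∀ d : ℕ, 0 < d →
        Mval (aRes (n + 1) (n + (m : ℤ) + 1) a) n u κ =
          Mval (aRes (n - (d : ℤ) + 1) (n + (m : ℤ) + 1) a) (n - (d : ℤ)) u κ) ∧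
    (∀ d : ℕ, 0 < d →
      Mval (aRes (n + 1) (n + (m : ℤ) + 1) a) n u κ =
        Mval (aRes (n + 1) (n + (m : ℤ) + (d : ℤ) + 1) a) n u κ) := by
  -- Bounds on tableau entries
  have key : ∀ (C : ℕ → ℕ → ℤ), IsTab u κ C → ∀ p q : ℕ, p < q → q < u →
      n + 1 ≤ C p q ∧ C p q + (q : ℤ) - p ≤ n + (m : ℤ) + 1 := by
    intro C hC p q hpq hq
    have h1 := tab_lb hC q hq p hpq.le
    have h2 := tab_ub hC (q - p) p q (by omega) hq
    have h3 := (hrange p (hpq.trans hq)).1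
    have h4 := (hrange q hq).2
    have hc : ((q - p : ℕ) : ℤ) = (q : ℤ) - p := by
      rw [Nat.cast_sub hpq.le]
    rw [hc] at h2
    omega
  -- Equality of the tableau-sum sets for any two large enough intervals
  have tabEq : ∀ lo1 hi1 lo2 hi2 : ℤ, lo1 ≤ n + 1 → lo2 ≤ n + 1 →
      n + (m : ℤ) + 1 ≤ hi1 → n + (m : ℤ) + 1 ≤ hi2 →
      {S : ℤ | ∃ C, IsTab u κ C ∧ S = TabSum (aRes lo1 hi1 a) u C} =
      {S : ℤ | ∃ C, IsTab u κ C ∧ S = TabSum (aRes lo2 hi2 a) u C} := by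
    intro lo1 hi1 lo2 hi2 hl1 hl2 hh1 hh2
    have congrC : ∀ C, IsTab u κ C →
        TabSum (aRes lo1 hi1 a) u C = TabSum (aRes lo2 hi2 a) u C := by
      intro C hC
      apply tabSum_congr
      intro p q hpq hq
      obtain ⟨hb1, hb2⟩ := key C hC p q hpq hq
      have hpqz : (p : ℤ) < q := by exact_mod_cast hpq
      have hij : C p q < C p q + (q : ℤ) - p := by omega
      unfold aRes
      rw [if_pos ⟨by omega, hij, by omega⟩, if_pos ⟨by omega, hij, by omega⟩]
    ext S
    simp only [Set.mem_setOf_eq]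
    constructor
    · rintro ⟨C, hC, rfl⟩; exact ⟨C, hC, congrC C hC⟩
    · rintro ⟨C, hC, rfl⟩; exact ⟨C, hC, (congrC C hC).symm⟩
  constructor
  · -- Part 1
    intro hk d hd
    unfold Mval
    rw [tabEq (n + 1) (n + (m : ℤ) + 1) (n - (d : ℤ) + 1) (n + (m : ℤ) + 1)
      (le_refl _) (by push_cast; omega) (le_refl _) (le_refl _)]
    congr 1
    congr 1
    refine Finset.sum_congr rfl fun j hj => ?_
    simp only [Finset.mem_range] at hj
    have hκ0 : κ 0 ≤ κ j := by
      rcases Nat.eq_zero_or_pos j with rfl | hj0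
      · exact le_refl _
      · exact (hmono 0 j hj0 hj).le
    have hκj := (hrange j hj).1
    have hsplit : Finset.Ico (n - (d : ℤ) + 1) (κ j) =
        Finset.Ico (n - (d : ℤ) + 1) (n + 1) ∪ Finset.Ico (n + 1) (κ j) :=
      (Finset.Ico_union_Ico_eq_Ico (by omega) (by omega)).symm
    rw [hsplit, Finset.sum_union (by
      apply Finset.Ico_disjoint_Ico_consecutive)]
    have hzero : ∑ i ∈ Finset.Ico (n - (d : ℤ) + 1) (n + 1),
        ((aRes (n - (d : ℤ) + 1) (n + (m : ℤ) + 1) a) i (κ j) : ℤ) = 0 := by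
      apply Finset.sum_eq_zero
      intro i hi
      simp only [Finset.mem_Ico] at hi
      have hz : a i (κ j) = 0 := ha i (κ j) (by omega)
      unfold aRes
      split_ifs <;> simp [hz]
    rw [hzero, zero_add]
    refine Finset.sum_congr rfl fun i hi => ?_
    simp only [Finset.mem_Ico] at hi
    unfold aRes
    rw [if_pos ⟨by omega, by omega, (hrange j hj).2⟩,
        if_pos ⟨by omega, by omega, (hrange j hj).2⟩]
  · -- Part 2
    intro d hd
    unfold Mval
    rw [tabEq (n + 1) (n + (m : ℤ) + 1) (n + 1) (n + (m : ℤ) + (d : ℤ) + 1)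
      (le_refl _) (le_refl _) (le_refl _) (by push_cast; omega)]
    congr 1
    congr 1
    refine Finset.sum_congr rfl fun j hj => ?_
    simp only [Finset.mem_range] at hj
    refine Finset.sum_congr rfl fun i hi => ?_
    simp only [Finset.mem_Ico] at hi
    have h2 := (hrange j hj).2
    unfold aRes
    rw [if_pos ⟨by omega, by omega, by omega⟩,
        if_pos ⟨by omega, by omega, by omega⟩]
end

section
/- Let l ≥ 3 and let B^{(1),ap}_{l-1} denote the set of aperiodic Lusztig data of type A^{(1)}_{l-1}. Then a ∈ B^{(1)}_{l-1} satisfies ε_p(a) = 0 for all p if and only if a = a_z for some z ∈ Z, where a_z is defined by (a_z)_{i,j} = z_{j-i}. In particular, the set of maximal elements of B^{(1)}_{l-1} equals {a_z : z ∈ Z}. -/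
/-!
`ε_p(a) = 0` for every `p` says that all partial sums `A_k^{(p)}(a)`, `k ≤ p`, are nonpositive.
Summing `A_{p-r}^{(p)}(a)` over a full period of `p` telescopes along the diagonals of `a` and
gives `0` by `l`-periodicity, so every `A_k^{(p)}(a)` vanishes. Consecutive partial sums differ
by `a_{k,p+1} - a_{k-1,p}`, hence `a` is invariant under the diagonal shift `(i, j) ↦ (i+1, j+1)`,
i.e. `a = a_z` with `z_n = a_{0,n}`. Conversely every term of `A_k^{(p)}(a_z)` is zero.
-/

/-- `A_k^{(p)}(a) = ∑_{s ≤ k} (a_{s,p+1} - a_{s-1,p})`; since `a_{i,j} = 0`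
for `j - i ≥ N`, all terms with `s < p + 1 - N` vanish and the sum equals the
finite sum over `p + 1 - N ≤ s ≤ k`. -/
noncomputable def Acoef (a : ℤ → ℤ → ℕ) (N : ℕ) (p k : ℤ) : ℤ :=
  ∑ s ∈ Finset.Icc (p + 1 - (N : ℤ)) k, ((a s (p + 1) : ℤ) - (a (s - 1) p : ℤ))

/-- `ε_p(a) = max {A_k^{(p)}(a) : k ≤ p}`. -/
noncomputable def epsP (a : ℤ → ℤ → ℕ) (N : ℕ) (p : ℤ) : ℤ :=
  sSup {A : ℤ | ∃ k : ℤ, k ≤ p ∧ A = Acoef a N p k}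

/-- `A_k^{*(p)}(a) = ∑_{t ≥ k+1} (a_{p,t} - a_{p+1,t+1})`; all terms with
`t > p + N` vanish, so the sum equals the finite sum over `k+1 ≤ t ≤ p + N`. -/
noncomputable def AstarCoef (a : ℤ → ℤ → ℕ) (N : ℕ) (p k : ℤ) : ℤ :=
  ∑ t ∈ Finset.Icc (k + 1) (p + (N : ℤ)), ((a p t : ℤ) - (a (p + 1) (t + 1) : ℤ))

/-- `ε_p^*(a) = max {A_k^{*(p)}(a) : k ≥ p}`. -/
noncomputable def epsStar (a : ℤ → ℤ → ℕ) (N : ℕ) (p : ℤ) : ℤ :=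
  sSup {A : ℤ | ∃ k : ℤ, p ≤ k ∧ A = AstarCoef a N p k}

open Finset

section Acoef

variable (a : ℤ → ℤ → ℕ) (N : ℕ)

lemma acoef_eq_zero_of_lt {p k : ℤ} (hk : k < p + 1 - N) : Acoef a N p k = 0 := by
  rw [Acoef, Icc_eq_empty (by omega), sum_empty]

lemma acoef_eq_acoef_sub_one_add {p k : ℤ} (hk : p + 1 - N ≤ k) :
    Acoef a N p k = Acoef a N p (k - 1) + ((a k (p + 1) : ℤ) - a (k - 1) p) := by
  rw [Acoef, ← insert_Icc_sub_one_right_eq_Icc hk, sum_insert (by simp), add_comm, Acoef]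

lemma acoef_sub_eq_sum (p r : ℤ) :
    Acoef a N p (p - r) =
      ∑ u ∈ Icc r ((N : ℤ) - 1), ((a (p - u) (p + 1) : ℤ) - a (p - u - 1) p) := by
  refine sum_nbij' (p - ·) (p - ·) ?_ ?_ (fun _ _ => sub_sub_cancel p _)
    (fun _ _ => sub_sub_cancel p _) fun _ _ => by rw [sub_sub_cancel]
  all_goals intro s hs; simp only [mem_Icc] at hs ⊢; omega

lemma bddAbove_acoef (p : ℤ) : BddAbove {A : ℤ | ∃ k : ℤ, k ≤ p ∧ A = Acoef a N p k} := by
  refine ((Set.finite_Icc (p - N) p).image (Acoef a N p)).subset ?_ |>.bddAbove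
  rintro _ ⟨k, hk, rfl⟩
  refine ⟨max k (p - N), ⟨le_max_right _ _, max_le hk (by omega)⟩, ?_⟩
  rcases le_total k (p - N) with h | h
  · rw [max_eq_right h, acoef_eq_zero_of_lt a N (by omega : p - N < _), acoef_eq_zero_of_lt a N (by omega)]
  · rw [max_eq_left h]

/-- `A_{p-N}^{(p)}(a)` is an empty sum, so `0` always lies in the set defining `ε_p(a)`. -/
lemma epsP_eq_zero_iff (p : ℤ) : epsP a N p = 0 ↔ ∀ k ≤ p, Acoef a N p k ≤ 0 := by
  constructor
  · rintro h k hk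
    exact h ▸ le_csSup (bddAbove_acoef a N p) ⟨k, hk, rfl⟩
  · intro h
    refine IsGreatest.csSup_eq ⟨⟨p - N, by omega, (acoef_eq_zero_of_lt a N (by omega)).symm⟩, ?_⟩
    rintro _ ⟨k, hk, rfl⟩
    exact h k hk

variable {a} {l : ℕ} (hper : ∀ i j : ℤ, a (i + l) (j + l) = a i j)
include hper

lemma sum_range_acoef_eq_zero (p r : ℤ) :
    ∑ i ∈ range l, Acoef a N (p + i) (p + i - r) = 0 := by
  simp_rw [acoef_sub_eq_sum, sum_comm (s := range l)]
  refine sum_eq_zero fun u _ => ?_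
  -- along the diagonal `j - i = u + 1` the sum telescopes over one period
  set g : ℕ → ℤ := fun i => a (p - u - 1 + i) (p + i)
  have hg : ∀ i : ℕ, ((a (p + i - u) (p + i + 1) : ℤ) - a (p + i - u - 1) (p + i))
      = g (i + 1) - g i := fun i => by
    simp only [g]
    congr 3 <;> push_cast <;> ring
  rw [sum_congr rfl fun i _ => hg i, sum_range_sub]
  simp [g, hper]

variable (hl : 0 < l) (heps : ∀ p, epsP a N p = 0)
include hl heps

lemma acoef_eq_zero_of_epsP_eq_zero {p k : ℤ} (hk : k ≤ p) : Acoef a N p k = 0 := by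
  have hnonpos : ∀ i ∈ range l, Acoef a N (p + i) (p + i - (p - k)) ≤ 0 := fun i _ =>
    (epsP_eq_zero_iff a N _).1 (heps _) _ (by omega)
  simpa using (sum_eq_zero_iff_of_nonpos hnonpos).1 (sum_range_acoef_eq_zero N hper p (p - k)) 0
    (mem_range.2 hl)

lemma apply_add_one_add_one_of_epsP_eq_zero (ha : ∀ i j : ℤ, (N : ℤ) ≤ j - i → a i j = 0)
    {i j : ℤ} (hij : i < j) : a (i + 1) (j + 1) = a i j := by
  rcases le_or_gt (j - i) N with h | h
  · have := acoef_eq_acoef_sub_one_add a N (p := j) (k := i + 1) (by omega)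
    rw [acoef_eq_zero_of_epsP_eq_zero N hper hl heps (by omega),
      acoef_eq_zero_of_epsP_eq_zero N hper hl heps (by omega), add_sub_cancel_right] at this
    omega
  · rw [ha _ _ (by omega), ha _ _ (by omega)]

end Acoef

theorem stmt13_general (l : ℕ) (hl : 3 ≤ l) (a : ℤ → ℤ → ℕ) (N : ℕ)
    (ha : ∀ i j : ℤ, (N : ℤ) ≤ j - i → a i j = 0)
    (hper : ∀ i j : ℤ, a (i + (l : ℤ)) (j + (l : ℤ)) = a i j) :
    (∀ p : ℤ, epsP a N p = 0) ↔
      ∃ z : ℕ → ℕ, (∃ B : ℕ, ∀ n ≥ B, z n = 0) ∧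
        ∀ i j : ℤ, i < j → a i j = z (j - i).toNat := by
  constructor
  · intro heps
    refine ⟨fun n => a 0 n, ⟨N, fun n hn => ha 0 n (by omega)⟩, fun i j hij => ?_⟩
    have hperiodic : Function.Periodic (fun m => a m (m + (j - i))) 1 := fun m => by
      simpa [add_right_comm] using
        apply_add_one_add_one_of_epsP_eq_zero N hper (by omega) heps ha (by omega : m < m + (j - i))
    simpa [Int.toNat_of_nonneg (by omega : 0 ≤ j - i)] using hperiodic.int_mul_eq i
  · rintro ⟨z, -, hz⟩ p
    refine (epsP_eq_zero_iff a N p).2 fun k hk => (sum_eq_zero fun s hs => ?_).le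
    rw [mem_Icc] at hs
    rw [hz _ _ (by omega), hz _ _ (by omega), sub_sub_eq_add_sub, add_sub_right_comm, sub_self]

/-- A Lusztig datum `a` of type `A_{l-1}^{(1)}` (periodic, with bound `N`)
satisfies `ε_p(a) = 0` for all `p` if and only if `a = a_z` for some finitely
supported sequence `z` of nonnegative integers, where `(a_z)_{i,j} = z_{j-i}`.
In particular, the maximal elements of `B_{l-1}^{(1)}` are exactly the `a_z`. -/
theorem stmt13 (l : ℕ) (hl : 3 ≤ l) (a : ℤ → ℤ → ℕ) (N : ℕ) (hN : 0 < N)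
    (ha : ∀ i j : ℤ, (N : ℤ) ≤ j - i → a i j = 0)
    (hper : ∀ i j : ℤ, a (i + (l : ℤ)) (j + (l : ℤ)) = a i j) :
    (∀ p : ℤ, epsP a N p = 0) ↔
      ∃ z : ℕ → ℕ, (∃ B : ℕ, ∀ n ≥ B, z n = 0) ∧
        ∀ i j : ℤ, i < j → a i j = z (j - i).toNat :=
  stmt13_general l hl a N ha hper
end

section
/- For the Lusztig datum a_1 of type A^{(1)}_{l-1} given by (a_1)_{i,j} = δ_{j-i,1} (i.e., a_{i,j} = 1 if j = i+1, else 0), and for every Maya diagram k, the integer M_k(a_1) equals 0. Consequently Φ_ℤ(a_1) = O* = Φ_ℤ(a_0), so the map Φ_ℤ : B_ℤ → {collections of integers indexed by Maya diagrams} is not injective. -/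
/-- The Lusztig datum `a_1` with `(a_1)_{i,j} = δ_{j-i,1}` (bound `N = 2`). -/
def aOne : ℤ → ℤ → ℕ := fun i j => if j = i + 1 then 1 else 0

/-- For the Lusztig datum `a_1` and any Maya diagram `k` (contained between
`ℤ_{≤ n}` and `ℤ_{≤ n+m+1}`, with its restriction to a sufficiently large
interval `I₀ = [n+1, n+m]` enumerated by `κ`, the left part being the padding
`κ t = n + 1 + t` for `t < 2 = N_{a_1}`), one has `M_k(a_1) = 0`.
Consequently `Φ_ℤ(a_1) = O^* = Φ_ℤ(a_0)` although `a_1 ≠ a_0`, so `Φ_ℤ` is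
not injective. -/
theorem stmt17 (k : Set ℤ) (n : ℤ) (m u : ℕ)
    (hsub : ∀ z : ℤ, z ≤ n → z ∈ k)
    (hub : ∀ z ∈ k, z ≤ n + (m : ℤ) + 1)
    (κ : ℕ → ℤ)
    (hmono : ∀ s t : ℕ, s < t → t < u → κ s < κ t)
    (himg : ∀ z : ℤ, (n + 1 ≤ z ∧ z ≤ n + (m : ℤ) + 1 ∧ z ∈ k) ↔
      ∃ t : ℕ, t < u ∧ κ t = z)
    (hinit : ∀ t < 2, κ t = n + 1 + (t : ℤ)) (hu : 2 ≤ u) :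
    Mval (aRes (n + 1) (n + (m : ℤ) + 1) aOne) n u κ = 0 ∧
    Mval (aRes (n + 1) (n + (m : ℤ) + 1) (fun _ _ => 0)) n u κ = 0 ∧
    aOne ≠ (fun _ _ => 0) := by
  have hb : ∀ t, t < u → n + 1 ≤ κ t ∧ κ t ≤ n + (m : ℤ) + 1 := by
    intro t ht
    have := (himg (κ t)).mpr ⟨t, ht, rfl⟩
    exact ⟨this.1, this.2.1⟩
  have hκ0 : κ 0 = n + 1 := by simpa using hinit 0 (by norm_num)
  have hκ1 : κ 1 = n + 2 := by
    have := hinit 1 (by norm_num); push_cast at this; linarith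
  have hκge : ∀ j, 1 ≤ j → j < u → n + 2 ≤ κ j := by
    intro j hj1 hju
    rcases eq_or_lt_of_le hj1 with h | h
    · subst h; omega
    · have := hmono 1 j h hju; omega
  -- auxiliary count
  have hcount : ∑ p ∈ Finset.range u, (if p + 1 < u then (1 : ℤ) else 0) = (u : ℤ) - 1 := by
    have h1 : (Finset.range u).filter (fun p => p + 1 < u) = Finset.range (u - 1) := by
      ext p; simp [Finset.mem_filter]; omega
    rw [Finset.sum_ite, h1]
    simp
    omega
  -- the canonical tableau
  set C₀ : ℕ → ℕ → ℤ := fun p _ => κ p with hC₀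
  have htab₀ : IsTab u κ C₀ := by
    refine ⟨fun p _ => rfl, fun p q _ _ => le_rfl, fun p q hpq hq => ?_⟩
    exact hmono p (p + 1) (by omega) (by omega)
  refine ⟨?_, ?_, ?_⟩
  · -- M for a₁
    have sum1 : ∀ j < u, ∑ i ∈ Finset.Ico (n + 1) (κ j),
        ((aRes (n + 1) (n + (m : ℤ) + 1) aOne) i (κ j) : ℤ) = if j = 0 then 0 else 1 := by
      intro j hj
      obtain ⟨hl, hr⟩ := hb j hj
      have hcongr : ∀ i ∈ Finset.Ico (n + 1) (κ j),
          ((aRes (n + 1) (n + (m : ℤ) + 1) aOne) i (κ j) : ℤ)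
            = if i = κ j - 1 then (1 : ℤ) else 0 := by
        intro i hi
        rw [Finset.mem_Ico] at hi
        unfold aRes aOne
        rw [if_pos ⟨hi.1, hi.2, hr⟩]
        by_cases h : i = κ j - 1
        · have heq : κ j = i + 1 := by omega
          rw [if_pos heq, if_pos h]; norm_num
        · have hne : κ j ≠ i + 1 := by omega
          rw [if_neg hne, if_neg h]; norm_num
      rw [Finset.sum_congr rfl hcongr, Finset.sum_ite_eq' (Finset.Ico (n+1) (κ j)) (κ j - 1)
        (fun _ => (1 : ℤ))]
      rcases Nat.eq_zero_or_pos j with h0 | h0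
      · subst h0
        simp [Finset.mem_Ico, hκ0]
      · have := hκge j h0 hj
        have : κ j - 1 ∈ Finset.Ico (n + 1) (κ j) := by
          rw [Finset.mem_Ico]; omega
        simp [this, Nat.pos_iff_ne_zero.mp h0]
    have hfirst : ∑ j ∈ Finset.range u, ∑ i ∈ Finset.Ico (n + 1) (κ j),
        ((aRes (n + 1) (n + (m : ℤ) + 1) aOne) i (κ j) : ℤ) = (u : ℤ) - 1 := by
      rw [Finset.sum_congr rfl (fun j hj => sum1 j (Finset.mem_range.mp hj))]
      have h1 : (Finset.range u).filter (fun j => ¬ j = 0) = Finset.Ico 1 u := by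
        ext p; simp [Finset.mem_filter]; omega
      rw [Finset.sum_ite, Finset.sum_const, Finset.sum_const, h1]
      simp
      omega
    -- value of tab sum on C₀
    have hval₀ : TabSum (aRes (n + 1) (n + (m : ℤ) + 1) aOne) u C₀ = (u : ℤ) - 1 := by
      rw [TabSum, ← hcount]
      apply Finset.sum_congr rfl
      intro p hp
      rw [Finset.mem_range] at hp
      have hinner : ∀ q ∈ Finset.range u,
          (if p < q then ((aRes (n + 1) (n + (m : ℤ) + 1) aOne) (C₀ p q)
            (C₀ p q + (q : ℤ) - (p : ℤ)) : ℤ) else 0)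
          = if q = p + 1 then (1 : ℤ) else 0 := by
        intro q hq
        rw [Finset.mem_range] at hq
        by_cases h : q = p + 1
        · subst h
          have h1 : n + 1 ≤ κ p := (hb p hp).1
          have h2 : κ p + 1 ≤ κ (p + 1) := by
            have := hmono p (p + 1) (by omega) hq; omega
          have h3 : κ (p + 1) ≤ n + (m : ℤ) + 1 := (hb (p + 1) hq).2
          have harg : ((p : ℤ) + 1) - (p : ℤ) = 1 := by ring
          simp only [hC₀, if_pos (Nat.lt_succ_self p)]
          push_cast
          rw [show κ p + ((p : ℤ) + 1) - (p : ℤ) = κ p + 1 by ring]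
          have hres : (aRes (n + 1) (n + (m : ℤ) + 1) aOne) (κ p) (κ p + 1) = 1 := by
            unfold aRes aOne
            rw [if_pos ⟨h1, by omega, by omega⟩, if_pos rfl]
          exact_mod_cast hres
        · by_cases h2 : p < q
          · have hq2 : (2 : ℤ) ≤ (q : ℤ) - (p : ℤ) := by
              have : p + 2 ≤ q := by omega
              push_cast
              omega
            have : κ p + (q : ℤ) - (p : ℤ) ≠ κ p + 1 := by omega
            simp [hC₀, h2, h, aRes, aOne, this]
          · simp [h2, h]
      rw [Finset.sum_congr rfl hinner, Finset.sum_ite_eq' (Finset.range u) (p + 1)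
        (fun _ => (1 : ℤ))]
      simp
    -- lower bound
    have hlb : ∀ C : ℕ → ℕ → ℤ, IsTab u κ C →
        (u : ℤ) - 1 ≤ TabSum (aRes (n + 1) (n + (m : ℤ) + 1) aOne) u C := by
      intro C hC
      obtain ⟨hdiag, hrow, hcol⟩ := hC
      rw [TabSum, ← hcount]
      apply Finset.sum_le_sum
      intro p hp
      rw [Finset.mem_range] at hp
      by_cases hpu : p + 1 < u
      · rw [if_pos hpu]
        have hnonneg : ∀ q ∈ Finset.range u,
            (0 : ℤ) ≤ if p < q then ((aRes (n + 1) (n + (m : ℤ) + 1) aOne) (C p q)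
              (C p q + (q : ℤ) - (p : ℤ)) : ℤ) else 0 := by
          intro q _; split <;> positivity
        have hmem : p + 1 ∈ Finset.range u := Finset.mem_range.mpr hpu
        refine le_trans ?_ (Finset.single_le_sum hnonneg hmem)
        rw [if_pos (Nat.lt_succ_self p)]
        have h1 : κ p ≤ C p (p + 1) := by
          have := hrow p p le_rfl hpu
          rw [hdiag p hp] at this; exact this
        have h2 : C p (p + 1) < κ (p + 1) := by
          have := hcol p (p + 1) le_rfl hpu
          rw [hdiag (p + 1) hpu] at this; exact this
        have h3 : n + 1 ≤ κ p := (hb p hp).1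
        have h4 : κ (p + 1) ≤ n + (m : ℤ) + 1 := (hb (p + 1) hpu).2
        push_cast
        rw [show C p (p + 1) + ((p : ℤ) + 1) - (p : ℤ) = C p (p + 1) + 1 by ring]
        have hres : (aRes (n + 1) (n + (m : ℤ) + 1) aOne) (C p (p + 1)) (C p (p + 1) + 1) = 1 := by
          unfold aRes aOne
          rw [if_pos ⟨by omega, by omega, by omega⟩, if_pos rfl]
        rw [hres]
        norm_num
      · rw [if_neg hpu]
        apply Finset.sum_nonneg
        intro q _; split <;> positivity
    have hinf : sInf {S : ℤ | ∃ C : ℕ → ℕ → ℤ, IsTab u κ C ∧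
        S = TabSum (aRes (n + 1) (n + (m : ℤ) + 1) aOne) u C} = (u : ℤ) - 1 := by
      apply IsLeast.csInf_eq
      constructor
      · exact ⟨C₀, htab₀, hval₀.symm⟩
      · rintro S ⟨C, hC, rfl⟩
        exact hlb C hC
    rw [Mval, hfirst, hinf]
    ring
  · -- M for a₀
    have hz : ∀ i j : ℤ, (aRes (n + 1) (n + (m : ℤ) + 1) (fun _ _ => 0)) i j = 0 := by
      intro i j; simp [aRes]
    have hinf : sInf {S : ℤ | ∃ C : ℕ → ℕ → ℤ, IsTab u κ C ∧
        S = TabSum (aRes (n + 1) (n + (m : ℤ) + 1) (fun _ _ => 0)) u C} = 0 := by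
      apply IsLeast.csInf_eq
      constructor
      · exact ⟨C₀, htab₀, by simp [TabSum, hz]⟩
      · rintro S ⟨C, hC, rfl⟩
        simp [TabSum, hz]
    rw [Mval, hinf]
    simp [hz]
  · intro h
    have := congrFun (congrFun h 0) 1
    simp [aOne] at this
end

section
/- For any z ∈ Z (a finitely supported sequence of nonnegative integers) the maximal Lusztig datum a_z with (a_z)_{i,j} = z_{j-i} satisfies M_k(a_z) = 0 for every Maya diagram k; i.e., Φ_ℤ(a_z) = O*, the all-zero collection. -/
/-- The maximal Lusztig datum `a_z`, `(a_z)_{i,j} = z_{j-i}`, attached to a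
finitely supported sequence `z` of nonnegative integers. -/
def aZ (z : ℕ → ℕ) : ℤ → ℤ → ℕ :=
  fun i j => if i < j then z (j - i).toNat else 0


lemma kappa_ge (n : ℤ) (u : ℕ) (κ : ℕ → ℤ)
    (hmono : ∀ s t : ℕ, s < t → t < u → κ s < κ t)
    (h0 : κ 0 = n + 1) :
    ∀ p, p < u → n + 1 + (p : ℤ) ≤ κ p := by
  intro p
  induction p with
  | zero => intro _; simp [h0]
  | succ p ih =>
    intro hp
    have h1 := ih (Nat.lt_of_succ_lt hp)
    have h2 := hmono p (p + 1) (Nat.lt_succ_self p) hp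
    push_cast
    push_cast at h1
    omega

lemma tab_row (u : ℕ) (κ : ℕ → ℤ) (C : ℕ → ℕ → ℤ) (h : IsTab u κ C) :
    ∀ p q, p ≤ q → q < u → κ p ≤ C p q := by
  obtain ⟨hd, hrow, -⟩ := h
  intro p q
  induction q with
  | zero =>
    intro hpq hq
    have : p = 0 := Nat.le_zero.mp hpq
    subst this
    rw [hd 0 hq]
  | succ q ih =>
    intro hpq hq
    rcases Nat.lt_or_ge p (q + 1) with h1 | h1
    · have hpq' : p ≤ q := Nat.lt_succ_iff.mp h1
      have h2 := ih hpq' (Nat.lt_of_succ_lt hq)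
      have h3 := hrow p q hpq' hq
      omega
    · have : p = q + 1 := le_antisymm hpq h1
      rw [this, hd (q + 1) hq]

lemma tab_col (u : ℕ) (κ : ℕ → ℤ) (C : ℕ → ℕ → ℤ) (h : IsTab u κ C) :
    ∀ p q, p ≤ q → q < u → C p q + ((q : ℤ) - (p : ℤ)) ≤ κ q := by
  obtain ⟨hd, -, hcol⟩ := h
  intro p q hpq hq
  have aux : ∀ t, p ≤ t → t ≤ q → C p q + ((t : ℤ) - (p : ℤ)) ≤ C t q := by
    intro t
    induction t with
    | zero =>
      intro h1 h2
      have : p = 0 := Nat.le_zero.mp h1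
      subst this
      simp
    | succ t ih =>
      intro h1 h2
      rcases Nat.lt_or_ge p (t + 1) with h3 | h3
      · have h4 : p ≤ t := Nat.lt_succ_iff.mp h3
        have h5 := ih h4 (le_trans (Nat.le_succ t) h2)
        have h6 := hcol t q h2 hq
        push_cast
        omega
      · have : p = t + 1 := le_antisymm h1 h3
        subst this
        simp
  have h7 := aux q hpq le_rfl
  rw [hd q hq] at h7
  exact h7

/-- For any `z ∈ 𝒵` (with `z_v = 0` for `v ≥ N`) and any Maya diagram `k`
(contained between `ℤ_{≤ n}` and `ℤ_{≤ n+m+1}`, with its restriction to a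
sufficiently large interval `I₀ = [n+1, n+m]` enumerated by `κ`, the left
part being the padding `κ t = n + 1 + t` for `t < N`), one has
`M_k(a_z) = 0`; i.e. `Φ_ℤ(a_z) = O^*`, the all-zero collection. -/
theorem stmt18 (z : ℕ → ℕ) (N : ℕ) (hN : 0 < N)
    (hz : ∀ v : ℕ, N ≤ v → z v = 0)
    (k : Set ℤ) (n : ℤ) (m u : ℕ)
    (hsub : ∀ w : ℤ, w ≤ n → w ∈ k)
    (hub : ∀ w ∈ k, w ≤ n + (m : ℤ) + 1)
    (κ : ℕ → ℤ)
    (hmono : ∀ s t : ℕ, s < t → t < u → κ s < κ t)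
    (himg : ∀ w : ℤ, (n + 1 ≤ w ∧ w ≤ n + (m : ℤ) + 1 ∧ w ∈ k) ↔
      ∃ t : ℕ, t < u ∧ κ t = w)
    (hinit : ∀ t < N, κ t = n + 1 + (t : ℤ)) (hu : N ≤ u) :
    Mval (aRes (n + 1) (n + (m : ℤ) + 1) (aZ z)) n u κ = 0 := by

  set a := aRes (n + 1) (n + (m : ℤ) + 1) (aZ z) with ha
  have hκ0 : κ 0 = n + 1 := by simpa using hinit 0 hN
  have hκlb : ∀ p, p < u → n + 1 + (p : ℤ) ≤ κ p := kappa_ge n u κ hmono hκ0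
  have hκub : ∀ q, q < u → κ q ≤ n + (m : ℤ) + 1 := fun q hq =>
    ((himg (κ q)).mpr ⟨q, hq, rfl⟩).2.1
  -- value of a at tableau positions
  have hval : ∀ C : ℕ → ℕ → ℤ, IsTab u κ C → ∀ p q : ℕ, p < q → q < u →
      (a (C p q) (C p q + (q : ℤ) - (p : ℤ)) : ℤ) = (z (q - p) : ℤ) := by
    intro C hC p q hpq hq
    have h1 : κ p ≤ C p q := tab_row u κ C hC p q hpq.le hq
    have h2 : C p q + ((q : ℤ) - (p : ℤ)) ≤ κ q := tab_col u κ C hC p q hpq.le hq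
    have hlbp := hκlb p (hpq.trans hq)
    have hubq := hκub q hq
    have hp : n + 1 ≤ C p q := by omega
    have hqb : C p q + (q : ℤ) - (p : ℤ) ≤ n + (m : ℤ) + 1 := by omega
    have hpq' : (p : ℤ) < (q : ℤ) := by exact_mod_cast hpq
    have hlt : C p q < C p q + (q : ℤ) - (p : ℤ) := by omega
    simp only [ha, aRes, aZ]
    rw [if_pos ⟨hp, hlt, hqb⟩, if_pos hlt]
    congr 1
    have hcast : C p q + (q : ℤ) - (p : ℤ) - C p q = ((q - p : ℕ) : ℤ) := by
      push_cast [Nat.cast_sub hpq.le]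
      ring
    rw [hcast, Int.toNat_natCast]
  set T0 : ℤ := ∑ p ∈ Finset.range u, ∑ q ∈ Finset.range u,
      if p < q then (z (q - p) : ℤ) else 0 with hT0
  have htabsum : ∀ C : ℕ → ℕ → ℤ, IsTab u κ C → TabSum a u C = T0 := by
    intro C hC
    unfold TabSum
    refine Finset.sum_congr rfl fun p hp => Finset.sum_congr rfl fun q hq => ?_
    split_ifs with h
    · exact hval C hC p q h (Finset.mem_range.mp hq)
    · rfl
  -- existence of a tableau
  have hC0 : IsTab u κ (fun p q => κ q - ((q : ℤ) - (p : ℤ))) := by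
    refine ⟨fun p _ => by ring, fun p q hpq hq => ?_, fun p q hpq hq => ?_⟩
    · have := hmono q (q + 1) (Nat.lt_succ_self q) hq
      push_cast
      omega
    · push_cast
      omega
  have hSet : {S : ℤ | ∃ C : ℕ → ℕ → ℤ, IsTab u κ C ∧ S = TabSum a u C} = {T0} := by
    ext S
    simp only [Set.mem_setOf_eq, Set.mem_singleton_iff]
    constructor
    · rintro ⟨C, hC, rfl⟩
      exact htabsum C hC
    · rintro rfl
      exact ⟨_, hC0, (htabsum _ hC0).symm⟩
  rw [Mval, hSet, csInf_singleton]
  -- now show the first sum equals T0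
  have key : ∀ j, j < u → ∑ i ∈ Finset.Ico (n + 1) (κ j), (a i (κ j) : ℤ)
      = ∑ p ∈ Finset.range u, if p < j then (z (j - p) : ℤ) else 0 := by
    intro j hj
    have hjub := hκub j hj
    have hjlb := hκlb j hj
    -- LHS in terms of z
    have step1 : ∑ i ∈ Finset.Ico (n + 1) (κ j), (a i (κ j) : ℤ)
        = ∑ d ∈ Finset.Icc (1 : ℤ) (κ j - n - 1), (z d.toNat : ℤ) := by
      refine Finset.sum_nbij' (fun i => κ j - i) (fun d => κ j - d) ?_ ?_ ?_ ?_ ?_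
      · intro i hi
        rw [Finset.mem_Ico] at hi
        simp only [Finset.mem_Icc]
        omega
      · intro d hd
        rw [Finset.mem_Icc] at hd
        simp only [Finset.mem_Ico]
        omega
      · intro i _; ring
      · intro d _; ring
      · intro i hi
        rw [Finset.mem_Ico] at hi
        simp only [ha, aRes, aZ]
        rw [if_pos ⟨hi.1, hi.2, hjub⟩, if_pos hi.2]
    -- RHS in terms of z
    have step2 : ∑ p ∈ Finset.range u, (if p < j then (z (j - p) : ℤ) else 0)
        = ∑ d ∈ Finset.Icc (1 : ℤ) (j : ℤ), (z d.toNat : ℤ) := by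
      have e1 : ∑ p ∈ Finset.range u, (if p < j then (z (j - p) : ℤ) else 0)
          = ∑ p ∈ Finset.range j, (if p < j then (z (j - p) : ℤ) else 0) := by
        refine (Finset.sum_subset (Finset.range_subset_range.mpr hj.le) ?_).symm
        intro p _ hp
        rw [Finset.mem_range] at hp
        rw [if_neg hp]
      rw [e1]
      refine Finset.sum_nbij' (fun p : ℕ => (j : ℤ) - (p : ℤ))
        (fun d : ℤ => j - d.toNat) ?_ ?_ ?_ ?_ ?_
      · intro p hp
        rw [Finset.mem_range] at hp
        simp only [Finset.mem_Icc]
        omega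
      · intro d hd
        rw [Finset.mem_Icc] at hd
        simp only [Finset.mem_range]
        omega
      · intro p hp
        rw [Finset.mem_range] at hp
        omega
      · intro d hd
        rw [Finset.mem_Icc] at hd
        omega
      · intro p hp
        rw [Finset.mem_range] at hp
        rw [if_pos hp]
        have h9 : ((j : ℤ) - (p : ℤ)).toNat = j - p := by omega
        rw [h9]
    rw [step1, step2]
    -- compare the two Icc sums
    refine (Finset.sum_subset (Finset.Icc_subset_Icc_right (by omega)) ?_).symm
    intro d hd hd'
    rw [Finset.mem_Icc] at hd
    rw [Finset.mem_Icc, not_and] at hd'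
    have hdj : (j : ℤ) < d := by
      have := hd' hd.1
      omega
    rcases Nat.lt_or_ge j N with hjN | hjN
    · have := hinit j hjN
      omega
    · have : z d.toNat = 0 := hz d.toNat (by omega)
      rw [this]
      exact Int.natCast_zero
  have hsum : ∑ j ∈ Finset.range u, ∑ i ∈ Finset.Ico (n + 1) (κ j), (a i (κ j) : ℤ) = T0 := by
    rw [hT0, Finset.sum_comm]
    exact Finset.sum_congr rfl fun j hj => key j (Finset.mem_range.mp hj)
  rw [hsum]
  ring
end
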